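/- Let z₁ ∈ 𝔻 and σ ∈ 𝕋, and define f(ζ) = σ ζ² (1 − conj(z₁) ζ)/(ζ − z₁) for ζ ∈ 𝕋. Then f maps 𝕋 into 𝕋, and f is a sense-preserving circle homeomorphism if and only if |z₁| ≤ 1/3; moreover, f is a circle diffeomorphism if and only if |z₁| < 1/3. -/

import Mathlib

open Complex MeasureTheory intervalIntegral ComplexConjugate

/-- A sense-preserving homeomorphism of the unit circle, described via a continuous
strictly increasing degree-one lift. -/
def CirclePosHomeo (f : ℂ → ℂ) : Prop :=
  ∃ F : ℝ → ℝ, Continuous F ∧ StrictMono F ∧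
    (∀ θ, F (θ + 2 * Real.pi) = F θ + 2 * Real.pi) ∧
    ∀ θ : ℝ, f (Complex.exp (θ * Complex.I)) = Complex.exp (F θ * Complex.I)

/-- A sense-preserving diffeomorphism of the unit circle, described via a `C¹`
degree-one lift with everywhere positive derivative. -/
def CirclePosDiffeo (f : ℂ → ℂ) : Prop :=
  ∃ F : ℝ → ℝ, ContDiff ℝ 1 F ∧ (∀ θ, 0 < deriv F θ) ∧
    (∀ θ, F (θ + 2 * Real.pi) = F θ + 2 * Real.pi) ∧
    ∀ θ : ℝ, f (Complex.exp (θ * Complex.I)) = Complex.exp (F θ * Complex.I)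

/-!
On the circle `ζ - z₁ = ζ · conj w` with `w = 1 - conj z₁ ζ`, so for `ζ = e^{iθ}` we get
`f ζ = σ ζ w / conj w`, which has modulus one. Since `w` lies in the right half-plane,
`G θ = arg σ + θ + 2 arg w` is a smooth degree-one lift of `f`, and every continuous lift differs
from `G` by a constant (uniqueness of lifts through `ℝ → ℝ/2πℤ`). Writing `u = conj z₁ e^{iθ}`,
`G' = 1 - 2 Re (u / (1 - u)) = (1 - 4 Re u + 3 |u|²) / |1 - u|²`. Over `|u| = r` this is smallest
at `u = r`, i.e. at `θ = arg z₁`, where it equals `(1 - 3r) / (1 - r)`. Hence `G` is monotone iff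
`r ≤ 1/3`, and then strictly so, since for `r = 1/3` the derivative vanishes only on the
countable set where `u = 1/3`; and `G' > 0` everywhere iff `r < 1/3`.
-/

theorem strictMono_of_hasDerivAt_nonneg {f f' : ℝ → ℝ} (hf : ∀ x, HasDerivAt f (f' x) x)
    (hf' : ∀ x, 0 ≤ f' x) (hzero : {x | f' x = 0}.Countable) : StrictMono f := by
  have hmono : Monotone f := monotone_of_deriv_nonneg (fun x ↦ (hf x).differentiableAt)
    fun x ↦ (hf x).deriv ▸ hf' x
  intro a b hab
  obtain ⟨c, hc, hac, hcb⟩ := (hzero.dense_compl ℝ).exists_between hab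
  refine lt_of_le_of_ne (hmono hab.le) fun hfab ↦ hc ?_
  have hconst : f =ᶠ[nhds c] fun _ ↦ f a := by
    filter_upwards [Ioo_mem_nhds hac hcb] with t ht
    exact le_antisymm (hfab ▸ hmono ht.2.le) (hmono ht.1.le)
  exact (hf c).unique ((hasDerivAt_const c (f a)).congr_of_eventuallyEq hconst)

theorem sub_eq_sub_of_exp_mul_I_eq {F G : ℝ → ℝ} (hF : Continuous F) (hG : Continuous G)
    (h : ∀ θ, exp (F θ * I) = exp (G θ * I)) (a b : ℝ) : F a - G a = F b - G b := by
  have hangle : ∀ θ, ((F θ - G θ : ℝ) : AddCircle (2 * Real.pi)) = 0 := by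
    intro θ
    obtain ⟨n, hn⟩ := Circle.exp_eq_exp.1 (Circle.ext (h θ))
    exact (AddCircle.coe_eq_zero_iff _).2 ⟨n, by rw [zsmul_eq_mul]; linarith⟩
  exact (AddCircle.isCoveringMap_coe (2 * Real.pi)).const_of_comp (hF.sub hG)
    (fun a b ↦ (hangle a).trans (hangle b).symm) a b

theorem countable_setOf_mul_exp_mul_I_eq (c : ℂ) {w : ℂ} (hw : w ≠ 0) :
    {θ : ℝ | c * exp (θ * I) = w}.Countable := by
  rcases Set.eq_empty_or_nonempty {θ : ℝ | c * exp (θ * I) = w} with h | ⟨θ₀, hθ₀⟩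
  · simp [h]
  have hc : c ≠ 0 := by rintro rfl; exact hw (by simpa using hθ₀.symm)
  refine (Set.countable_range fun n : ℤ ↦ θ₀ + n * (2 * Real.pi)).mono fun θ hθ ↦ ?_
  obtain ⟨n, hn⟩ := Circle.exp_eq_exp.1 (Circle.ext (mul_left_cancel₀ hc (hθ.trans hθ₀.symm)))
  exact ⟨n, hn.symm⟩

noncomputable def liftDeriv (u : ℂ) : ℝ := 1 - 2 * (u / (1 - u)).re

theorem liftDeriv_eq {u : ℂ} (hu : u ≠ 1) :
    liftDeriv u = (1 - 4 * u.re + 3 * ‖u‖ ^ 2) / normSq (1 - u) := by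
  have hN : normSq (1 - u) = (1 - u.re) ^ 2 + u.im ^ 2 := by
    rw [normSq_apply]; simp only [sub_re, one_re, sub_im, one_im]; ring
  have hpos : 0 < (1 - u.re) ^ 2 + u.im ^ 2 := hN ▸ normSq_pos.2 (sub_ne_zero.2 hu.symm)
  rw [liftDeriv, div_re, Complex.sq_norm, normSq_apply u, hN]
  simp only [sub_re, one_re, sub_im, one_im]
  field_simp
  ring

theorem liftDeriv_nonneg {u : ℂ} (hu : ‖u‖ ≤ 1 / 3) : 0 ≤ liftDeriv u := by
  have hu1 : u ≠ 1 := by rintro rfl; norm_num at hu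
  rw [liftDeriv_eq hu1]
  exact div_nonneg (by nlinarith [re_le_norm u, norm_nonneg u]) (normSq_nonneg _)

theorem eq_one_third_of_liftDeriv_eq_zero {u : ℂ} (hu : ‖u‖ ≤ 1 / 3) (h : liftDeriv u = 0) :
    u = 1 / 3 := by
  have hu1 : u ≠ 1 := by rintro rfl; norm_num at hu
  rw [liftDeriv_eq hu1, div_eq_zero_iff,
    or_iff_left (normSq_pos.2 (sub_ne_zero.2 hu1.symm)).ne'] at h
  have hre := re_le_norm u
  have hnorm : ‖u‖ ^ 2 = u.re ^ 2 + u.im ^ 2 := by rw [Complex.sq_norm, normSq_apply]; ring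
  have hr : ‖u‖ = 1 / 3 := by nlinarith [norm_nonneg u]
  have hre' : u.re = 1 / 3 := by nlinarith
  have him : u.im = 0 := by nlinarith
  exact Complex.ext (by simp [hre']) (by simp [him])

theorem liftDeriv_pos {u : ℂ} (hu : ‖u‖ < 1 / 3) : 0 < liftDeriv u := by
  refine (liftDeriv_nonneg hu.le).lt_of_ne fun h ↦ hu.ne ?_
  rw [eq_one_third_of_liftDeriv_eq_zero hu.le h.symm]
  simp

theorem liftDeriv_ofReal {r : ℝ} (hr : r < 1) : liftDeriv r = (1 - 3 * r) / (1 - r) := by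
  have : (1 : ℝ) - r ≠ 0 := by linarith
  rw [liftDeriv, ← ofReal_one, ← ofReal_sub, ← ofReal_div, ofReal_re]
  field_simp
  ring

theorem liftDeriv_ofReal_nonneg_iff {r : ℝ} (hr : r < 1) : 0 ≤ liftDeriv r ↔ r ≤ 1 / 3 := by
  rw [liftDeriv_ofReal hr, div_nonneg_iff]
  constructor
  · rintro (⟨h, -⟩ | ⟨-, h⟩) <;> linarith
  · intro h; left; constructor <;> linarith

theorem liftDeriv_ofReal_pos_iff {r : ℝ} (hr : r < 1) : 0 < liftDeriv r ↔ r < 1 / 3 := by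
  rw [liftDeriv_ofReal hr, div_pos_iff_of_pos_right (by linarith)]
  constructor <;> intro h <;> linarith

theorem div_conj_eq_exp {w : ℂ} (hw : w ≠ 0) : w / conj w = exp (↑(2 * arg w) * I) := by
  have hn : (‖w‖ : ℂ) ≠ 0 := by simpa using hw
  conv_lhs => rw [← norm_mul_exp_arg_mul_I w]
  rw [map_mul, conj_ofReal, ← exp_conj, mul_div_mul_left _ _ hn, ← Complex.exp_sub]
  simp only [map_mul, conj_ofReal, conj_I]
  congr 1; push_cast; ring

theorem conj_mul_exp_arg_mul_I (z : ℂ) : conj z * exp (arg z * I) = ‖z‖ := by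
  conv_lhs => rw [← norm_mul_exp_arg_mul_I z]
  rw [map_mul, conj_ofReal, ← exp_conj, mul_assoc, ← Complex.exp_add]
  simp

theorem exp_arg_mul_I_of_norm_eq_one {ζ : ℂ} (hζ : ‖ζ‖ = 1) : exp (arg ζ * I) = ζ := by
  simpa [hζ] using norm_mul_exp_arg_mul_I ζ

theorem one_sub_mul_exp_mem_slitPlane {c : ℂ} (hc : ‖c‖ < 1) (θ : ℝ) :
    1 - c * exp (θ * I) ∈ slitPlane := by
  rw [sub_eq_add_neg]
  exact mem_slitPlane_of_norm_lt_one (by simpa [norm_exp_ofReal_mul_I] using hc)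

theorem hasDerivAt_arg_one_sub_mul_exp {c : ℂ} (hc : ‖c‖ < 1) (θ : ℝ) :
    HasDerivAt (fun t : ℝ ↦ arg (1 - c * exp (t * I)))
      (-(c * exp (θ * I) / (1 - c * exp (θ * I))).re) θ := by
  have hexp : HasDerivAt (fun t : ℝ ↦ exp (t * I)) (exp (θ * I) * I) θ := by
    simpa using ((hasDerivAt_id (θ : ℂ)).mul_const I).cexp.comp_ofReal
  have hlog := ((hexp.const_mul c).const_sub 1).clog_real (one_sub_mul_exp_mem_slitPlane hc θ)
  have him := imCLM.hasFDerivAt.comp_hasDerivAt θ hlog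
  simp only [Function.comp_def, imCLM_apply, log_im] at him
  rwa [← mul_assoc, neg_div, mul_div_right_comm, neg_im, mul_I_im] at him

noncomputable def blaschkeLift (z₁ σ : ℂ) (θ : ℝ) : ℝ :=
  arg σ + θ + 2 * arg (1 - conj z₁ * exp (θ * I))

section BlaschkeLift

variable {z₁ : ℂ} (σ : ℂ)

theorem hasDerivAt_blaschkeLift (hz₁ : ‖z₁‖ < 1) (θ : ℝ) :
    HasDerivAt (blaschkeLift z₁ σ) (liftDeriv (conj z₁ * exp (θ * I))) θ := by
  have h := ((hasDerivAt_id θ).const_add (arg σ)).add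
    ((hasDerivAt_arg_one_sub_mul_exp (c := conj z₁) (by rwa [norm_conj]) θ).const_mul 2)
  exact h.congr_deriv (by unfold liftDeriv; ring)

theorem differentiable_blaschkeLift (hz₁ : ‖z₁‖ < 1) : Differentiable ℝ (blaschkeLift z₁ σ) :=
  fun θ ↦ (hasDerivAt_blaschkeLift σ hz₁ θ).differentiableAt

theorem deriv_blaschkeLift (hz₁ : ‖z₁‖ < 1) :
    deriv (blaschkeLift z₁ σ) = fun θ : ℝ ↦ liftDeriv (conj z₁ * exp (θ * I)) :=
  funext fun θ ↦ (hasDerivAt_blaschkeLift σ hz₁ θ).deriv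

theorem deriv_blaschkeLift_arg (hz₁ : ‖z₁‖ < 1) :
    deriv (blaschkeLift z₁ σ) (arg z₁) = liftDeriv ‖z₁‖ := by
  rw [deriv_blaschkeLift σ hz₁]
  exact congrArg liftDeriv (conj_mul_exp_arg_mul_I z₁)

theorem contDiff_blaschkeLift (hz₁ : ‖z₁‖ < 1) : ContDiff ℝ 1 (blaschkeLift z₁ σ) := by
  refine contDiff_one_iff_deriv.2 ⟨differentiable_blaschkeLift σ hz₁, ?_⟩
  rw [deriv_blaschkeLift σ hz₁]
  have hne : ∀ θ : ℝ, 1 - conj z₁ * exp (θ * I) ≠ 0 := fun θ ↦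
    slitPlane_ne_zero (one_sub_mul_exp_mem_slitPlane (by rwa [norm_conj]) θ)
  unfold liftDeriv
  fun_prop (disch := exact hne)

theorem blaschkeLift_add_two_pi (θ : ℝ) :
    blaschkeLift z₁ σ (θ + 2 * Real.pi) = blaschkeLift z₁ σ θ + 2 * Real.pi := by
  have : exp (↑(θ + 2 * Real.pi) * I) = exp (θ * I) := by
    rw [← exp_periodic (θ * I)]
    push_cast; ring_nf
  rw [blaschkeLift, blaschkeLift, this]
  ring

theorem exp_blaschkeLift_mul_I (hz₁ : ‖z₁‖ < 1) (hσ : ‖σ‖ = 1) (θ : ℝ) :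
    exp (blaschkeLift z₁ σ θ * I) =
      σ * exp (θ * I) ^ 2 * (1 - conj z₁ * exp (θ * I)) / (exp (θ * I) - z₁) := by
  rw [blaschkeLift]
  set e := exp (θ * I)
  set w := 1 - conj z₁ * e
  have he : e ≠ 0 := exp_ne_zero _
  have hw : w ≠ 0 := slitPlane_ne_zero (one_sub_mul_exp_mem_slitPlane (by rwa [norm_conj]) θ)
  have hconj_e : conj e = e⁻¹ := by
    rw [← exp_conj, ← exp_neg]; simp
  have hden : e - z₁ = e * conj w := by
    simp only [w, map_sub, map_one, map_mul, conj_conj, hconj_e]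
    field_simp
  calc exp (↑(arg σ + θ + 2 * arg w) * I) = exp (arg σ * I) * e * exp (↑(2 * arg w) * I) := by
        rw [← exp_add, ← exp_add]; congr 1; push_cast; ring
    _ = σ * e * (w / conj w) := by rw [exp_arg_mul_I_of_norm_eq_one hσ, div_conj_eq_exp hw]
    _ = σ * e ^ 2 * w / (e - z₁) := by
        rw [hden]; field_simp [(map_ne_zero _).2 hw]

theorem strictMono_blaschkeLift (hz₁ : ‖z₁‖ < 1) (h : ‖z₁‖ ≤ 1 / 3) :
    StrictMono (blaschkeLift z₁ σ) := by
  have hu : ∀ θ : ℝ, ‖conj z₁ * exp (θ * I)‖ ≤ 1 / 3 := by simpa [norm_exp_ofReal_mul_I] using h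
  refine strictMono_of_hasDerivAt_nonneg (hasDerivAt_blaschkeLift σ hz₁)
    (fun θ ↦ liftDeriv_nonneg (hu θ)) ?_
  exact (countable_setOf_mul_exp_mul_I_eq (conj z₁) (by norm_num)).mono
    fun θ hθ ↦ eq_one_third_of_liftDeriv_eq_zero (hu θ) hθ

end BlaschkeLift

/-- `f(ζ) = σ ζ² (1 − conj z₁ ζ)/(ζ − z₁)` maps `𝕋` into `𝕋`; it is a
circle homeomorphism iff `|z₁| ≤ 1/3` and a circle diffeomorphism iff `|z₁| < 1/3`. -/
theorem blaschke_quotient_degree_two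
    (z₁ : ℂ) (hz₁ : ‖z₁‖ < 1) (σ : ℂ) (hσ : ‖σ‖ = 1)
    (f : ℂ → ℂ) (hf : ∀ ζ : ℂ, f ζ = σ * ζ ^ 2 * (1 - conj z₁ * ζ) / (ζ - z₁)) :
    (∀ ζ : ℂ, ‖ζ‖ = 1 → ‖f ζ‖ = 1) ∧
    (CirclePosHomeo f ↔ ‖z₁‖ ≤ 1 / 3) ∧
    (CirclePosDiffeo f ↔ ‖z₁‖ < 1 / 3) := by
  have hlift : ∀ θ : ℝ, f (exp (θ * I)) = exp (blaschkeLift z₁ σ θ * I) := fun θ ↦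
    (hf _).trans (exp_blaschkeLift_mul_I σ hz₁ hσ θ).symm
  have hcont : Continuous (blaschkeLift z₁ σ) := (differentiable_blaschkeLift σ hz₁).continuous
  have hshift : ∀ F : ℝ → ℝ, Continuous F → (∀ θ : ℝ, f (exp (θ * I)) = exp (F θ * I)) →
      ∃ c, blaschkeLift z₁ σ = fun θ ↦ F θ - c := fun F hF hFf ↦
    ⟨F 0 - blaschkeLift z₁ σ 0, funext fun θ ↦ by
      linarith [sub_eq_sub_of_exp_mul_I_eq hF hcont (fun θ ↦ (hFf θ).symm.trans (hlift θ)) θ 0]⟩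
  refine ⟨fun ζ hζ ↦ ?_, ⟨?_, fun h ↦ ?_⟩, ⟨?_, fun h ↦ ?_⟩⟩
  · rw [← exp_arg_mul_I_of_norm_eq_one hζ, hlift, norm_exp_ofReal_mul_I]
  · rintro ⟨F, hFc, hFm, -, hF⟩
    obtain ⟨c, hc⟩ := hshift F hFc hF
    rw [← liftDeriv_ofReal_nonneg_iff hz₁, ← deriv_blaschkeLift_arg σ hz₁, hc]
    exact Monotone.deriv_nonneg fun a b hab ↦ sub_le_sub_right (hFm.monotone hab) c
  · exact ⟨_, hcont, strictMono_blaschkeLift σ hz₁ h, blaschkeLift_add_two_pi σ, hlift⟩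
  · rintro ⟨F, hF1, hFpos, -, hF⟩
    obtain ⟨c, hc⟩ := hshift F hF1.continuous hF
    rw [← liftDeriv_ofReal_pos_iff hz₁, ← deriv_blaschkeLift_arg σ hz₁, hc, deriv_sub_const]
    exact hFpos _
  · refine ⟨_, contDiff_blaschkeLift σ hz₁, fun θ ↦ ?_, blaschkeLift_add_two_pi σ, hlift⟩
    rw [deriv_blaschkeLift σ hz₁]
    exact liftDeriv_pos (by simpa [norm_exp_ofReal_mul_I] using h)
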